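/- arXiv:1107.2143 — 3 statements merged into one kernel-verified Lean document; each statement's English description precedes it below -/
import Mathlib

section
/- Let Λ ≥ 1, λ ∈ (0,1), C > 0 and C₁ > 0 be real constants satisfying C·C₁·(Λ − 1) < 1 − λ. Set γ = 1/C and α² = (Λ·C₁ + γ·λ)/(C₁ + γ). Then α² < 1, and for all nonnegative real numbers e₀, e₁, η₀, η₁, d satisfying (i) e₁² ≤ Λ·e₀² − d² (quasi-orthogonality), (ii) η₁² ≤ λ·η₀² + C·d² (estimator reduction), and (iii) e₀² ≤ C₁·η₀² (reliability upper bound), one has the contraction inequality e₁² + γ·η₁² ≤ α²·(e₀² + γ·η₀²). -/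
/-!
The quantity `e² + γ η²` with `γ = 1 / C` is chosen so that adding `γ` times the estimator
reduction to the quasi-orthogonality cancels the distance `d²` exactly, leaving
`e₁² + γ η₁² ≤ Λ e₀² + γ λ η₀²`. The factor `α²` is the mean of `Λ` and `λ` weighted by `C₁`
and `γ`; this weighting makes the excess `(Λ - α²) e₀²` exactly paid for, via reliability
`e₀² ≤ C₁ η₀²`, by the deficit `(α² - λ) γ η₀²`. The mean lies below `1` precisely when
`C₁ (Λ - 1) < γ (1 - λ)`, which is the hypothesis on the constants.
-/

section WeightedMean

variable {a b p q : ℝ}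

theorem weighted_mean_lt_one (hpq : 0 < p + q) (h : p * (a - 1) < q * (1 - b)) :
    (a * p + q * b) / (p + q) < 1 := by
  rw [div_lt_one hpq]
  linarith

theorem weighted_mean_le_left (hq : 0 ≤ q) (hpq : 0 < p + q) (hba : b ≤ a) :
    (a * p + q * b) / (p + q) ≤ a := by
  rw [div_le_iff₀ hpq]
  nlinarith

end WeightedMean

theorem add_mul_le_of_quasi_orthogonality_of_estimator_reduction
    {Λ lam C γ E₀ E₁ H₀ H₁ D : ℝ} (hγ : 0 ≤ γ) (hγC : γ * C = 1)
    (h_orth : E₁ ≤ Λ * E₀ - D) (h_red : H₁ ≤ lam * H₀ + C * D) :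
    E₁ + γ * H₁ ≤ Λ * E₀ + γ * lam * H₀ := by
  linear_combination h_orth + γ * h_red + D * hγC

theorem add_mul_le_mul_add_of_reliability {Λ lam C₁ γ α E₀ H₀ : ℝ}
    (hα : α * (C₁ + γ) = Λ * C₁ + γ * lam) (hαΛ : α ≤ Λ) (h_rel : E₀ ≤ C₁ * H₀) :
    Λ * E₀ + γ * lam * H₀ ≤ α * (E₀ + γ * H₀) := by
  linear_combination (Λ - α) * h_rel - H₀ * hα

/-- Abstract real-number core of the AFEM contraction argument (exact solvers). -/
theorem afem_contraction_step
    (Λ lam C C₁ : ℝ)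
    (hΛ : 1 ≤ Λ) (hlam : lam ∈ Set.Ioo (0:ℝ) 1) (hC : 0 < C) (hC₁ : 0 < C₁)
    (hcond : C * C₁ * (Λ - 1) < 1 - lam)
    (γ αsq : ℝ) (hγ : γ = 1 / C)
    (hαsq : αsq = (Λ * C₁ + γ * lam) / (C₁ + γ)) :
    αsq < 1 ∧
    ∀ e₀ e₁ η₀ η₁ d : ℝ,
      0 ≤ e₀ → 0 ≤ e₁ → 0 ≤ η₀ → 0 ≤ η₁ → 0 ≤ d →
      e₁ ^ 2 ≤ Λ * e₀ ^ 2 - d ^ 2 →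
      η₁ ^ 2 ≤ lam * η₀ ^ 2 + C * d ^ 2 →
      e₀ ^ 2 ≤ C₁ * η₀ ^ 2 →
      e₁ ^ 2 + γ * η₁ ^ 2 ≤ αsq * (e₀ ^ 2 + γ * η₀ ^ 2) := by
  have hγ_pos : 0 < γ := hγ ▸ one_div_pos.2 hC
  have hγC : γ * C = 1 := by rw [hγ, one_div_mul_cancel hC.ne']
  have hden : 0 < C₁ + γ := add_pos hC₁ hγ_pos
  have hcond' : C₁ * (Λ - 1) < γ * (1 - lam) := by
    linear_combination γ * hcond - C₁ * (Λ - 1) * hγC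
  have hαΛ : αsq ≤ Λ := hαsq ▸ weighted_mean_le_left hγ_pos.le hden (by linarith [hlam.2])
  have hα : αsq * (C₁ + γ) = Λ * C₁ + γ * lam := by rw [hαsq, div_mul_cancel₀ _ hden.ne']
  refine ⟨hαsq ▸ weighted_mean_lt_one hden hcond', ?_⟩
  intro e₀ e₁ η₀ η₁ d _ _ _ _ _ h_orth h_red h_rel
  calc e₁ ^ 2 + γ * η₁ ^ 2 ≤ Λ * e₀ ^ 2 + γ * lam * η₀ ^ 2 :=
        add_mul_le_of_quasi_orthogonality_of_estimator_reduction hγ_pos.le hγC h_orth h_red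
    _ ≤ αsq * (e₀ ^ 2 + γ * η₀ ^ 2) := add_mul_le_mul_add_of_reliability hα hαΛ h_rel
end

section
/- Let Λ ≥ 1, λ ∈ (0,1), C > 0 and C₁ > 0 be real constants with C·C₁·(Λ − 1) < 1 − λ. Then there exist γ > 0 and α ∈ (0,1) such that for all sequences (e_k), (η_k), (d_k) of nonnegative real numbers satisfying, for every k ∈ ℕ, (i) e_{k+1}² ≤ Λ·e_k² − d_k², (ii) η_{k+1}² ≤ λ·η_k² + C·d_k², and (iii) e_k² ≤ C₁·η_k², one has e_k² + γ·η_k² ≤ α^{2k}·(e₀² + γ·η₀²) for all k; in particular e_k → 0 and η_k → 0 as k → ∞. -/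
/-!
With the weight `γ = C⁻¹` the term `d_k²` cancels between (i) and `γ·`(ii), so the quasi-error
`E_k = e_k² + γ η_k²` satisfies `E_{k+1} ≤ Λ e_k² + (λ/C) η_k²`. Spending the surplus `(Λ - t) e_k²`
through reliability (iii) gives `E_{k+1} ≤ t E_k` for
`t = (C C₁ Λ + λ) / (1 + C C₁)`, and `t < 1` is exactly the hypothesis `C C₁ (Λ - 1) < 1 - λ`.
Hence `E_k ≤ t^k E_0`, and `α = √t`.
-/

open Filter Topology

namespace AFEM

noncomputable def contractionFactor (Λ lam C C₁ : ℝ) : ℝ :=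
  (C * C₁ * Λ + lam) / (1 + C * C₁)

variable {Λ lam C C₁ : ℝ}

lemma contractionFactor_pos (hΛ : 0 ≤ Λ) (hlam : 0 < lam) (hC : 0 ≤ C) (hC₁ : 0 ≤ C₁) :
    0 < contractionFactor Λ lam C C₁ := by
  unfold contractionFactor
  positivity

lemma contractionFactor_lt_one (hC : 0 ≤ C) (hC₁ : 0 ≤ C₁) (hcond : C * C₁ * (Λ - 1) < 1 - lam) :
    contractionFactor Λ lam C C₁ < 1 := by
  rw [contractionFactor, div_lt_one (by positivity)]
  linarith

lemma contractionFactor_step {E E' H H' D : ℝ} (hC : 0 < C) (hC₁ : 0 ≤ C₁)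
    (htΛ : contractionFactor Λ lam C C₁ ≤ Λ)
    (hE : E' ≤ Λ * E - D) (hH : H' ≤ lam * H + C * D) (hrel : E ≤ C₁ * H) :
    E' + C⁻¹ * H' ≤ contractionFactor Λ lam C C₁ * (E + C⁻¹ * H) := by
  set t := contractionFactor Λ lam C C₁
  have ht : t * (1 + C * C₁) = C * C₁ * Λ + lam := div_mul_cancel₀ _ (by positivity)
  have hcancel : E' + C⁻¹ * H' ≤ Λ * E + C⁻¹ * lam * H := by
    have := mul_le_mul_of_nonneg_left hH (inv_nonneg.2 hC.le)
    rw [mul_add, ← mul_assoc C⁻¹ C, inv_mul_cancel₀ hC.ne', one_mul] at this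
    linarith
  have hsurplus : (Λ - t) * E ≤ (Λ - t) * (C₁ * H) := mul_le_mul_of_nonneg_left hrel (by linarith)
  -- `t - lam = C C₁ (Λ - t)`: the weight of `H` below is exactly `t C⁻¹`.
  have hweight : C⁻¹ * lam + C₁ * (Λ - t) = t * C⁻¹ := by
    field_simp
    linarith
  calc E' + C⁻¹ * H' ≤ Λ * E + C⁻¹ * lam * H := hcancel
    _ ≤ t * E + (C⁻¹ * lam + C₁ * (Λ - t)) * H := by linarith
    _ = t * (E + C⁻¹ * H) := by rw [hweight]; ring

end AFEM

lemma tendsto_nhds_zero_of_sq_le {x s : ℕ → ℝ} (hs : Tendsto s atTop (𝓝 0))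
    (h : ∀ k, x k ^ 2 ≤ s k) : Tendsto x atTop (𝓝 0) := by
  refine squeeze_zero_norm (fun k => Real.abs_le_sqrt (h k)) ?_
  simpa [Function.comp_def] using (Real.continuous_sqrt.tendsto 0).comp hs

/-- Iterated abstract AFEM contraction: geometric decay of the total error and
convergence of errors and estimators to zero. -/
theorem afem_contraction_iterated
    (Λ lam C C₁ : ℝ)
    (hΛ : 1 ≤ Λ) (hlam : lam ∈ Set.Ioo (0:ℝ) 1) (hC : 0 < C) (hC₁ : 0 < C₁)
    (hcond : C * C₁ * (Λ - 1) < 1 - lam) :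
    ∃ γ > (0:ℝ), ∃ α ∈ Set.Ioo (0:ℝ) 1,
      ∀ e η d : ℕ → ℝ,
        (∀ k, 0 ≤ e k) → (∀ k, 0 ≤ η k) → (∀ k, 0 ≤ d k) →
        (∀ k, e (k+1) ^ 2 ≤ Λ * e k ^ 2 - d k ^ 2) →
        (∀ k, η (k+1) ^ 2 ≤ lam * η k ^ 2 + C * d k ^ 2) →
        (∀ k, e k ^ 2 ≤ C₁ * η k ^ 2) →
        (∀ k, e k ^ 2 + γ * η k ^ 2 ≤ α ^ (2 * k) * (e 0 ^ 2 + γ * η 0 ^ 2)) ∧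
        Filter.Tendsto e Filter.atTop (nhds 0) ∧
        Filter.Tendsto η Filter.atTop (nhds 0) := by
  set t := AFEM.contractionFactor Λ lam C C₁
  have ht0 : 0 < t := AFEM.contractionFactor_pos (by linarith) hlam.1 hC.le hC₁.le
  have ht1 : t < 1 := AFEM.contractionFactor_lt_one hC.le hC₁.le hcond
  refine ⟨C⁻¹, inv_pos.2 hC, √t, ⟨Real.sqrt_pos.2 ht0, by simpa using Real.sqrt_lt_sqrt ht0.le ht1⟩, ?_⟩
  intro e η d _ _ _ hdist hest hrel
  set S := e 0 ^ 2 + C⁻¹ * η 0 ^ 2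
  have hgeom : ∀ k, e k ^ 2 + C⁻¹ * η k ^ 2 ≤ t ^ k * S := fun k =>
    le_geom (u := fun k => e k ^ 2 + C⁻¹ * η k ^ 2) ht0.le k fun j _ =>
      AFEM.contractionFactor_step hC hC₁.le (ht1.le.trans hΛ) (hdist j) (hest j) (hrel j)
  have hlim : Tendsto (fun k => t ^ k * S) atTop (𝓝 0) := by
    simpa using (tendsto_pow_atTop_nhds_zero_of_lt_one ht0.le ht1).mul_const S
  refine ⟨fun k => by rw [pow_mul, Real.sq_sqrt ht0.le]; exact hgeom k, ?_, ?_⟩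
  · refine tendsto_nhds_zero_of_sq_le hlim fun k => ?_
    have : 0 ≤ C⁻¹ * η k ^ 2 := by positivity
    linarith [hgeom k]
  · refine tendsto_nhds_zero_of_sq_le (by simpa using hlim.const_mul C) fun k => ?_
    have : 0 ≤ e k ^ 2 := sq_nonneg _
    exact (inv_mul_le_iff₀ hC).1 ((le_add_of_nonneg_left this).trans (hgeom k))
end

section
/- For every λ ∈ (0,1) and C > 0, C₁ > 0, C₂ > 0 there exists Λ₀ > 1 such that for every Λ with 1 ≤ Λ < Λ₀ there exist constants μ > 0, ν ∈ (0,1), γ > 0 and α ∈ (0,1) with the following property: whenever (e_k), (d_k), (δ_k), (η_k) are sequences of nonnegative real numbers satisfying for all k ∈ ℕ (i) e_{k+1}² ≤ Λ·e_k² − d_k² (quasi-orthogonality of exact errors), (ii) η_{k+1}² ≤ λ·η_k² + C·(d_k + δ_k + δ_{k+1})² (estimator reduction for inexact solutions), (iii) e_k² ≤ C₁·(η_k + C₂·δ_k)² (reliability plus Lipschitz perturbation), and (iv) μ·δ_k² + δ_{k+1}² ≤ ν·η_k² (approximation property of the inexact solver), one has the contraction e_{k+1}² + γ·η_{k+1}²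 ≤ α²·(e_k² + γ·η_k²) for all k ∈ ℕ. -/
/-!
Take `μ = 1` and `γ = 1 / (2C)`. Splitting `(d_k + δ_k + δ_{k+1})² ≤ 2 d_k² + 4 (δ_k² + δ_{k+1}²)`,
the `d_k²` part of `γ η_{k+1}²` cancels against the `- d_k²` of quasi-orthogonality, and the
`δ`-part is at most `4Cν η_k²`, which for `8Cν ≤ 1 - λ` is absorbed into the estimator reduction.
This leaves `e_{k+1}² + γ η_{k+1}² ≤ Λ e_k² + γ q η_k²` with `q = (1 + λ) / 2 < 1`.
Reliability `e_k² ≤ M η_k²` trades part of `Λ e_k²` for `η_k²`; the best trade gives the factor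
`α² = (γ q + Λ M) / (γ + M)`, which is `< 1` precisely when `(Λ - 1) M < γ (1 - q)`.
-/

theorem add_add_sq_le (a b c : ℝ) : (a + b + c) ^ 2 ≤ 2 * a ^ 2 + 4 * (b ^ 2 + c ^ 2) := by
  nlinarith [sq_nonneg (a - b - c), sq_nonneg (b - c)]

theorem estimator_sq_le_of_reduction {lam C ν d δ₀ δ₁ η₀ η₁ : ℝ} (hC : 0 ≤ C)
    (hν : 8 * C * ν ≤ 1 - lam)
    (hred : η₁ ^ 2 ≤ lam * η₀ ^ 2 + C * (d + δ₀ + δ₁) ^ 2)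
    (hsolver : δ₀ ^ 2 + δ₁ ^ 2 ≤ ν * η₀ ^ 2) :
    η₁ ^ 2 ≤ (1 + lam) / 2 * η₀ ^ 2 + 2 * C * d ^ 2 := by
  have hyoung := mul_le_mul_of_nonneg_left (add_add_sq_le d δ₀ δ₁) hC
  have hsolver' := mul_le_mul_of_nonneg_left hsolver (by positivity : (0 : ℝ) ≤ 4 * C)
  nlinarith [sq_nonneg η₀]

theorem sq_le_of_reliable {C₁ C₂ ν e δ η : ℝ} (hC₁ : 0 ≤ C₁) (hν : ν ≤ 1)
    (hrel : e ^ 2 ≤ C₁ * (η + C₂ * δ) ^ 2) (hδ : δ ^ 2 ≤ ν * η ^ 2) :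
    e ^ 2 ≤ C₁ * (2 * (1 + C₂ ^ 2)) * η ^ 2 := by
  have hδη : δ ^ 2 ≤ η ^ 2 := hδ.trans (mul_le_of_le_one_left (sq_nonneg η) hν)
  have hsum : (η + C₂ * δ) ^ 2 ≤ 2 * (1 + C₂ ^ 2) * η ^ 2 := by
    nlinarith [(add_sq_le : (η + C₂ * δ) ^ 2 ≤ _), mul_le_mul_of_nonneg_left hδη (sq_nonneg C₂)]
  nlinarith [mul_le_mul_of_nonneg_left hsum hC₁]

section ContractionFactor

noncomputable def contractionFactor (γ q Λ M : ℝ) : ℝ := (γ * q + Λ * M) / (γ + M)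

variable {γ q Λ M : ℝ}

theorem le_contractionFactor_mul {x₀ x₁ y₀ y₁ : ℝ} (hγ : 0 ≤ γ) (hγM : 0 < γ + M) (hq : q ≤ Λ)
    (hx : x₀ ≤ M * y₀) (hstep : x₁ + γ * y₁ ≤ Λ * x₀ + γ * q * y₀) :
    x₁ + γ * y₁ ≤ contractionFactor γ q Λ M * (x₀ + γ * y₀) := by
  set A := contractionFactor γ q Λ M
  have hA : A * (γ + M) = γ * q + Λ * M := div_mul_cancel₀ _ hγM.ne'
  have hAΛ : A ≤ Λ := le_of_mul_le_mul_right (by linarith [mul_le_mul_of_nonneg_left hq hγ]) hγM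
  -- `(Λ - A) x₀ ≤ (Λ - A) M y₀`, and the definition of `A` makes the `y₀`-terms cancel.
  clear_value A
  linear_combination hstep + mul_le_mul_of_nonneg_left hx (sub_nonneg.mpr hAΛ) - y₀ * hA

theorem contractionFactor_pos (hγ : 0 < γ) (hM : 0 < M) (hq : 0 < q) (hΛ : 0 ≤ Λ) :
    0 < contractionFactor γ q Λ M := by
  rw [contractionFactor]
  positivity

theorem contractionFactor_lt_one (hγ : 0 < γ) (hM : 0 < M)
    (hΛ : Λ < 1 + γ * (1 - q) / M) :
    contractionFactor γ q Λ M < 1 := by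
  have h : (Λ - 1) * M < γ * (1 - q) := (lt_div_iff₀ hM).mp (by linarith)
  rw [contractionFactor, div_lt_one (by positivity)]
  linarith

end ContractionFactor

theorem afem_inexact_contraction_general
    (lam C C₁ C₂ : ℝ)
    (hlam : lam ∈ Set.Ioo (0:ℝ) 1) (hC : 0 < C) (hC₁ : 0 < C₁) :
    ∃ Λ₀ > (1:ℝ), ∀ Λ : ℝ, 1 ≤ Λ → Λ < Λ₀ →
      ∃ μ > (0:ℝ), ∃ ν ∈ Set.Ioo (0:ℝ) 1, ∃ γ > (0:ℝ), ∃ α ∈ Set.Ioo (0:ℝ) 1,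
        ∀ e d δ η : ℕ → ℝ,
          (∀ k, 0 ≤ e k) → (∀ k, 0 ≤ d k) → (∀ k, 0 ≤ δ k) → (∀ k, 0 ≤ η k) →
          (∀ k, e (k+1) ^ 2 ≤ Λ * e k ^ 2 - d k ^ 2) →
          (∀ k, η (k+1) ^ 2 ≤ lam * η k ^ 2 + C * (d k + δ k + δ (k+1)) ^ 2) →
          (∀ k, e k ^ 2 ≤ C₁ * (η k + C₂ * δ k) ^ 2) →
          (∀ k, μ * δ k ^ 2 + δ (k+1) ^ 2 ≤ ν * η k ^ 2) →
          ∀ k, e (k+1) ^ 2 + γ * η (k+1) ^ 2 ≤ α ^ 2 * (e k ^ 2 + γ * η k ^ 2) := by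
  obtain ⟨hlam₀, hlam₁⟩ := hlam
  set ν := (1 - lam) / (8 * C + 1)
  set γ := 1 / (2 * C)
  set q := (1 + lam) / 2 with hq
  have hq₀ : 0 < q := by rw [hq]; linarith
  have hq₁ : q < 1 := by rw [hq]; linarith
  set M := C₁ * (2 * (1 + C₂ ^ 2))
  have hν : 8 * C * ν ≤ 1 - lam := by
    rw [← mul_div_assoc, div_le_iff₀ (by positivity)]
    nlinarith
  have hν₁ : ν < 1 := by rw [div_lt_one (by positivity)]; linarith
  have hγ : 0 < γ := by positivity
  have hM : 0 < M := by positivity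
  refine ⟨1 + γ * (1 - q) / M, lt_add_of_pos_right 1 (by bound), fun Λ hΛ₁ hΛ₀ => ?_⟩
  set A := contractionFactor γ q Λ M
  have hA₀ : 0 < A := contractionFactor_pos hγ hM hq₀ (by linarith)
  refine ⟨1, one_pos, ν, ⟨by bound, hν₁⟩, γ, hγ, √A, ⟨by positivity, ?_⟩, ?_⟩
  · exact (Real.sqrt_lt_sqrt hA₀.le (contractionFactor_lt_one hγ hM hΛ₀)).trans_eq Real.sqrt_one
  intro e d δ η _ _ _ _ horth hred hrel hsolver k
  have hsolver_k : δ k ^ 2 + δ (k + 1) ^ 2 ≤ ν * η k ^ 2 := by simpa only [one_mul] using hsolver k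
  have hη := estimator_sq_le_of_reduction hC.le hν (hred k) hsolver_k
  have hstep : e (k + 1) ^ 2 + γ * η (k + 1) ^ 2 ≤ Λ * e k ^ 2 + γ * q * η k ^ 2 := by
    have hγC : γ * (2 * C) = 1 := one_div_mul_cancel (by positivity)
    linear_combination horth k + γ * hη + d k ^ 2 * hγC
  have he := sq_le_of_reliable hC₁.le hν₁.le (hrel k)
    (by nlinarith [sq_nonneg (δ (k + 1))] : δ k ^ 2 ≤ ν * η k ^ 2)
  rw [Real.sq_sqrt hA₀.le]
  exact le_contractionFactor_mul hγ.le (by positivity) (by linarith) he hstep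

/-- Abstract real-sequence form of the contraction theorem for AFEM with
inexact solvers. -/
theorem afem_inexact_contraction
    (lam C C₁ C₂ : ℝ)
    (hlam : lam ∈ Set.Ioo (0:ℝ) 1) (hC : 0 < C) (hC₁ : 0 < C₁) (hC₂ : 0 < C₂) :
    ∃ Λ₀ > (1:ℝ), ∀ Λ : ℝ, 1 ≤ Λ → Λ < Λ₀ →
      ∃ μ > (0:ℝ), ∃ ν ∈ Set.Ioo (0:ℝ) 1, ∃ γ > (0:ℝ), ∃ α ∈ Set.Ioo (0:ℝ) 1,
        ∀ e d δ η : ℕ → ℝ,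
          (∀ k, 0 ≤ e k) → (∀ k, 0 ≤ d k) → (∀ k, 0 ≤ δ k) → (∀ k, 0 ≤ η k) →
          (∀ k, e (k+1) ^ 2 ≤ Λ * e k ^ 2 - d k ^ 2) →
          (∀ k, η (k+1) ^ 2 ≤ lam * η k ^ 2 + C * (d k + δ k + δ (k+1)) ^ 2) →
          (∀ k, e k ^ 2 ≤ C₁ * (η k + C₂ * δ k) ^ 2) →
          (∀ k, μ * δ k ^ 2 + δ (k+1) ^ 2 ≤ ν * η k ^ 2) →
          ∀ k, e (k+1) ^ 2 + γ * η (k+1) ^ 2 ≤ α ^ 2 * (e k ^ 2 + γ * η k ^ 2) :=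
  afem_inexact_contraction_general lam C C₁ C₂ hlam hC hC₁
end
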